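/- Let Λ : ∂T → [0,1] be the map Λ(ζ) = Σ_{k≥1} ζ_k 2^{−k}, and define f : [0,1] → [0,1/2] by f(t) = cap^T(Λ^{−1}([0,t])). Then f is nondecreasing and continuous on [0,1], with f(0) = 0 and f(1) = 1/2. -/

import Mathlib

open scoped ENNReal NNReal
open Filter Topology

noncomputable section

/-- The vertex set of the dyadic tree `T`: finite binary strings. The boundary `∂T`
is the set of infinite binary sequences `ℕ → Bool`. `pre ζ k` is the prefix of
length `k` of the boundary point `ζ`. -/
def pre (ζ : ℕ → Bool) (k : ℕ) : List Bool := List.ofFn (fun i : Fin k => ζ i)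

/-- The tree condenser capacity `cap^T_n(E)`: the infimum of `Σ_x φ(x)²` over
`φ : T → [0,∞)` with `Iφ(ζ) = Σ_{x ∈ P(ζ)} φ(x) ≥ 1` on `E` and `φ(x) = 0`
whenever `d(x) ≤ n-1`.  For `n = 0` this is the tree capacity `cap^T(E)`. -/
noncomputable def treeCapN (n : ℕ) (E : Set (ℕ → Bool)) : ℝ≥0∞ :=
  sInf { c | ∃ φ : List Bool → ℝ≥0,
    (∀ ζ ∈ E, 1 ≤ ∑' k : ℕ, (φ (pre ζ k) : ℝ≥0∞)) ∧
    (∀ x : List Bool, x.length < n → φ x = 0) ∧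
    c = ∑' x : List Bool, (φ x : ℝ≥0∞) ^ 2 }

/-- The tree capacity `cap^T(E)` of a set `E ⊆ ∂T`. -/
noncomputable def treeCap (E : Set (ℕ → Bool)) : ℝ≥0∞ := treeCapN 0 E

/-- `Λ` at the level of the parameter: a binary sequence `ζ = (ζ_k)_{k ≥ 1}` is sent
to `t = Σ_{k≥1} ζ_k 2^{-k} ∈ [0,1]` (our sequences are indexed from `0`). -/
noncomputable def lamReal (ζ : ℕ → Bool) : ℝ :=
  ∑' k : ℕ, (if ζ k then ((2:ℝ) ^ (k+1))⁻¹ else 0)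

/-- The identification map `Λ : ∂T → 𝕋`, `ζ ↦ e^{2πit}` with `t = Σ_{k≥1} ζ_k 2^{-k}`. -/
noncomputable def lam (ζ : ℕ → Bool) : ℂ :=
  Complex.exp (2 * Real.pi * Complex.I * (lamReal ζ : ℂ))

/-!
Capacity is monotone and subadditive, and a cylinder of depth `n` has capacity at most
`1/(n+1)`: put the weight `1/(n+1)` on its `n+1` prefixes. A window `Λ⁻¹[s, s + 2⁻ⁿ]`
is covered by three such cylinders, which gives `f(t) ≤ f(s) + 3/(n+1)` for
`s ≤ t ≤ s + 2⁻ⁿ`, hence uniform continuity and `f(0) = 0`.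

For `f(1) = cap(∂T) = 1/2`, the weight `2^{-|x|-1}` gives `≤`. Conversely, let `φ` be
admissible and let `A(x) = Σ_l 2^{-|l|} φ(x l)` be the mean of `Iφ` over random rays
from `x`, so `A(x) = φ(x) + (A(x0) + A(x1))/2`. Always stepping to the child with the smaller
`A` yields a ray with `1 ≤ Iφ ≤ A(∅) = Σ_x 2^{-|x|} φ(x) ≤ Σ_x φ(x)² + 1/2` (AM–GM).
-/

lemma length_pre (ζ : ℕ → Bool) (n : ℕ) : (pre ζ n).length = n := List.length_ofFn

lemma pre_succ (ζ : ℕ → Bool) (n : ℕ) : pre ζ (n + 1) = pre ζ n ++ [ζ n] := by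
  rw [pre, List.ofFn_succ', List.concat_eq_append]; rfl

lemma pre_eq_pre_of_forall_lt {ζ ζ' : ℕ → Bool} {n : ℕ} (h : ∀ i < n, ζ i = ζ' i) :
    pre ζ n = pre ζ' n :=
  List.ofFn_inj.2 <| funext fun i => h i i.isLt

lemma tsum_list_length {α : Type*} [Fintype α] (g : ℕ → ℝ≥0∞) :
    ∑' x : List α, g x.length = ∑' n : ℕ, Fintype.card α ^ n * g n := by
  rw [← List.equivSigmaTuple.symm.tsum_eq, ENNReal.tsum_sigma']
  simp [List.equivSigmaTuple]

lemma tsum_list_eq_nil_add {α : Type*} (g : List α → ℝ≥0∞) :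
    ∑' l : List α, g l = g [] + ∑' p : α × List α, g (p.1 :: p.2) := by
  have hcons : Function.Injective (fun p : α × List α => p.1 :: p.2) := by
    rintro ⟨b, l⟩ ⟨c, m⟩ h; simpa using h
  rw [ENNReal.tsum_eq_add_tsum_ite [], ← hcons.tsum_eq]
  · exact congrArg _ (tsum_congr fun p => if_neg (List.cons_ne_nil _ _))
  · rintro (_ | ⟨b, l⟩) h
    · simp at h
    · exact ⟨(b, l), rfl⟩

lemma treeCap_le_tsum_sq {E : Set (ℕ → Bool)} (φ : List Bool → ℝ≥0)
    (hφ : ∀ ζ ∈ E, 1 ≤ ∑' k : ℕ, (φ (pre ζ k) : ℝ≥0∞)) :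
    treeCap E ≤ ∑' x : List Bool, (φ x : ℝ≥0∞) ^ 2 :=
  sInf_le ⟨φ, hφ, fun _ h => absurd h (Nat.not_lt_zero _), rfl⟩

lemma le_treeCap {E : Set (ℕ → Bool)} {c : ℝ≥0∞}
    (h : ∀ φ : List Bool → ℝ≥0, (∀ ζ ∈ E, 1 ≤ ∑' k : ℕ, (φ (pre ζ k) : ℝ≥0∞)) →
      c ≤ ∑' x : List Bool, (φ x : ℝ≥0∞) ^ 2) :
    c ≤ treeCap E :=
  le_sInf <| by rintro _ ⟨φ, hφ, -, rfl⟩; exact h φ hφ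

lemma treeCap_mono {E F : Set (ℕ → Bool)} (h : E ⊆ F) : treeCap E ≤ treeCap F :=
  le_treeCap fun φ hφ => treeCap_le_tsum_sq φ fun ζ hζ => hφ ζ (h hζ)

lemma treeCap_union_le (A B : Set (ℕ → Bool)) :
    treeCap (A ∪ B) ≤ treeCap A + treeCap B := by
  conv_rhs => simp only [treeCap, treeCapN, sInf_eq_iInf]
  refine ENNReal.le_iInf₂_add_iInf₂ ?_
  rintro _ ⟨φ, hφ, -, rfl⟩ _ ⟨ψ, hψ, -, rfl⟩
  calc treeCap (A ∪ B) ≤ ∑' x, ((φ ⊔ ψ) x : ℝ≥0∞) ^ 2 := by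
        refine treeCap_le_tsum_sq _ ?_
        rintro ζ (hζ | hζ)
        · exact (hφ ζ hζ).trans (ENNReal.tsum_le_tsum fun k => by simp)
        · exact (hψ ζ hζ).trans (ENNReal.tsum_le_tsum fun k => by simp)
    _ ≤ ∑' x, ((φ x : ℝ≥0∞) ^ 2 + (ψ x : ℝ≥0∞) ^ 2) :=
        ENNReal.tsum_le_tsum fun x => by
          rcases le_total (φ x) (ψ x) with h | h <;> simp [h]
    _ = _ := ENNReal.tsum_add

lemma treeCap_biUnion_le {ι : Type*} (s : Finset ι) (E : ι → Set (ℕ → Bool)) :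
    treeCap (⋃ i ∈ s, E i) ≤ ∑ i ∈ s, treeCap (E i) := by
  classical
  induction s using Finset.induction_on with
  | empty => simpa using treeCap_le_tsum_sq 0 (by simp)
  | insert i s hi ih =>
    rw [Finset.set_biUnion_insert, Finset.sum_insert hi]
    exact (treeCap_union_le _ _).trans (add_le_add le_rfl ih)

lemma tsum_inv_two_pow_succ : ∑' k : ℕ, (2⁻¹ : ℝ≥0∞) ^ (k + 1) = 1 := by
  simp_rw [pow_succ]
  rw [ENNReal.tsum_mul_right, ENNReal.tsum_geometric, ENNReal.one_sub_inv_two, inv_inv,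
    ENNReal.mul_inv_cancel two_ne_zero ENNReal.ofNat_ne_top]

lemma tsum_list_sq_inv_two_pow_succ :
    ∑' x : List Bool, ((2⁻¹ : ℝ≥0∞) ^ (x.length + 1)) ^ 2 = 2⁻¹ := by
  have hterm : ∀ n : ℕ, 2 ^ n * ((2⁻¹ : ℝ≥0∞) ^ (n + 1)) ^ 2 = 2⁻¹ ^ (n + 1) * 2⁻¹ := by
    intro n
    calc 2 ^ n * ((2⁻¹ : ℝ≥0∞) ^ (n + 1)) ^ 2 = (2 ^ n * 2⁻¹ ^ n) * (2⁻¹ ^ (n + 1) * 2⁻¹) := by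
          ring
      _ = 2⁻¹ ^ (n + 1) * 2⁻¹ := by
          rw [← mul_pow, ENNReal.mul_inv_cancel two_ne_zero ENNReal.ofNat_ne_top, one_pow,
            one_mul]
  rw [tsum_list_length (fun n => ((2⁻¹ : ℝ≥0∞) ^ (n + 1)) ^ 2), Fintype.card_bool,
    Nat.cast_ofNat, tsum_congr hterm,
    ENNReal.tsum_mul_right, tsum_inv_two_pow_succ, one_mul]

lemma treeCap_le_inv_two (E : Set (ℕ → Bool)) : treeCap E ≤ 2⁻¹ := by
  have hcoe : ∀ n : ℕ, (((2⁻¹ : ℝ≥0) ^ n : ℝ≥0) : ℝ≥0∞) = 2⁻¹ ^ n := by simp [ENNReal.inv_pow]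
  refine (treeCap_le_tsum_sq (fun x => 2⁻¹ ^ (x.length + 1)) fun ζ _ => ?_).trans_eq ?_
  · simp_rw [hcoe, length_pre, tsum_inv_two_pow_succ, le_rfl]
  · simp_rw [hcoe, tsum_list_sq_inv_two_pow_succ]

lemma treeCap_ne_top (E : Set (ℕ → Bool)) : treeCap E ≠ ⊤ :=
  ((treeCap_le_inv_two E).trans_lt (by norm_num)).ne

def cylinder (ζ₀ : ℕ → Bool) (n : ℕ) : Set (ℕ → Bool) := {ζ | ∀ i < n, ζ i = ζ₀ i}

lemma treeCap_cylinder_le (ζ₀ : ℕ → Bool) (n : ℕ) :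
    treeCap (cylinder ζ₀ n) ≤ ((n : ℝ≥0∞) + 1)⁻¹ := by
  classical
  set S := (Finset.range (n + 1)).image (pre ζ₀)
  set c : ℝ≥0 := ((n : ℝ≥0) + 1)⁻¹
  have hc : (c : ℝ≥0∞) = ((n : ℝ≥0∞) + 1)⁻¹ := by
    rw [ENNReal.coe_inv (by positivity)]; push_cast; rfl
  have hnc : ((n : ℝ≥0∞) + 1) * c = 1 := by
    rw [hc]; exact ENNReal.mul_inv_cancel (by simp) (by simp)
  let φ : List Bool → ℝ≥0 := fun x => if x ∈ S then c else 0
  refine (treeCap_le_tsum_sq φ fun ζ hζ => ?_).trans ?_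
  · calc (1 : ℝ≥0∞) = ∑ _k ∈ Finset.range (n + 1), (c : ℝ≥0∞) := by simp [hnc]
      _ = ∑ k ∈ Finset.range (n + 1), (φ (pre ζ k) : ℝ≥0∞) := by
          refine Finset.sum_congr rfl fun k hk => ?_
          have hS : pre ζ₀ k ∈ S := Finset.mem_image_of_mem _ hk
          rw [pre_eq_pre_of_forall_lt fun i hi => hζ i (by grind)]
          simp only [φ, if_pos hS]
      _ ≤ ∑' k, (φ (pre ζ k) : ℝ≥0∞) := ENNReal.sum_le_tsum _
  · calc ∑' x, (φ x : ℝ≥0∞) ^ 2 = ∑ _x ∈ S, (c : ℝ≥0∞) ^ 2 := by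
          rw [tsum_eq_sum (s := S) fun x hx => by simp [φ, hx]]
          exact Finset.sum_congr rfl fun x hx => by simp [φ, hx]
      _ = S.card * (c : ℝ≥0∞) ^ 2 := by simp
      _ ≤ ((n : ℝ≥0∞) + 1) * c ^ 2 := by
          gcongr
          exact_mod_cast Finset.card_image_le.trans (Finset.card_range _).le
      _ = ((n : ℝ≥0∞) + 1)⁻¹ := by rw [sq, ← mul_assoc, hnc, one_mul, hc]

/-- The mean of `∑_{k} ψ(x ++ ζ|_k)` over a uniformly random ray `ζ`. -/
def meanRaySum (ψ : List Bool → ℝ≥0∞) (x : List Bool) : ℝ≥0∞ :=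
  ∑' l : List Bool, 2⁻¹ ^ l.length * ψ (x ++ l)

lemma meanRaySum_eq (ψ : List Bool → ℝ≥0∞) (x : List Bool) :
    meanRaySum ψ x =
      ψ x + 2⁻¹ * (meanRaySum ψ (x ++ [false]) + meanRaySum ψ (x ++ [true])) := by
  have hchild : ∀ b : Bool, ∑' l : List Bool, 2⁻¹ ^ (b :: l).length * ψ (x ++ b :: l) =
      2⁻¹ * meanRaySum ψ (x ++ [b]) := fun b => by
    simp_rw [meanRaySum, ← ENNReal.tsum_mul_left, List.length_cons, pow_succ,
      List.append_assoc, List.singleton_append, mul_comm _ (2⁻¹ : ℝ≥0∞), mul_assoc]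
  rw [meanRaySum, tsum_list_eq_nil_add, ENNReal.tsum_prod', tsum_bool, hchild, hchild,
    mul_add]
  simp

def minChild (A : List Bool → ℝ≥0∞) (x : List Bool) : Bool :=
  decide (A (x ++ [true]) < A (x ++ [false]))

lemma apply_append_minChild (A : List Bool → ℝ≥0∞) (x : List Bool) :
    A (x ++ [minChild A x]) = min (A (x ++ [false])) (A (x ++ [true])) := by
  by_cases h : A (x ++ [true]) < A (x ++ [false])
  · simp [minChild, h, min_eq_right h.le]
  · simp [minChild, h, min_eq_left (not_lt.1 h)]

def greedyPath (A : List Bool → ℝ≥0∞) : ℕ → List Bool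
  | 0 => []
  | n + 1 => greedyPath A n ++ [minChild A (greedyPath A n)]

lemma pre_greedyPath (A : List Bool → ℝ≥0∞) (n : ℕ) :
    pre (fun k => minChild A (greedyPath A k)) n = greedyPath A n := by
  induction n with
  | zero => rfl
  | succ n ih => rw [pre_succ, ih, greedyPath]

lemma min_le_inv_two_mul_add (a b : ℝ≥0∞) : min a b ≤ 2⁻¹ * (a + b) :=
  calc min a b = 2⁻¹ * (min a b + min a b) := by
        rw [← two_mul, ← mul_assoc, ENNReal.inv_mul_cancel two_ne_zero ENNReal.ofNat_ne_top,
          one_mul]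
    _ ≤ 2⁻¹ * (a + b) := by gcongr; exacts [min_le_left _ _, min_le_right _ _]

lemma add_meanRaySum_minChild_le (ψ : List Bool → ℝ≥0∞) (x : List Bool) :
    ψ x + meanRaySum ψ (x ++ [minChild (meanRaySum ψ) x]) ≤ meanRaySum ψ x := by
  rw [apply_append_minChild (meanRaySum ψ) x, meanRaySum_eq ψ x]
  exact add_le_add le_rfl (min_le_inv_two_mul_add _ _)

lemma exists_tsum_pre_le_meanRaySum (ψ : List Bool → ℝ≥0∞) :
    ∃ ζ : ℕ → Bool, ∑' k, ψ (pre ζ k) ≤ meanRaySum ψ [] := by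
  set A := meanRaySum ψ
  have hpath : ∀ n, ∑ k ∈ Finset.range n, ψ (greedyPath A k) + A (greedyPath A n) ≤ A [] := by
    intro n
    induction n with
    | zero => simp [greedyPath]
    | succ n ih =>
      rw [Finset.sum_range_succ, add_assoc]
      exact (add_le_add_right (add_meanRaySum_minChild_le ψ _) _).trans ih
  refine ⟨fun k => minChild A (greedyPath A k), ?_⟩
  rw [ENNReal.tsum_eq_iSup_nat]
  refine iSup_le fun n => ?_
  simp_rw [pre_greedyPath]
  exact le_self_add.trans (hpath n)

lemma inv_two_le_tsum_sq (φ : List Bool → ℝ≥0)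
    (hφ : ∀ ζ : ℕ → Bool, 1 ≤ ∑' k : ℕ, (φ (pre ζ k) : ℝ≥0∞)) :
    2⁻¹ ≤ ∑' x : List Bool, (φ x : ℝ≥0∞) ^ 2 := by
  obtain ⟨ζ, hζ⟩ := exists_tsum_pre_le_meanRaySum fun x => φ x
  have hamgm : ∀ x : List Bool, 2⁻¹ ^ x.length * (φ x : ℝ≥0∞) ≤
      (φ x : ℝ≥0∞) ^ 2 + ((2⁻¹ : ℝ≥0∞) ^ (x.length + 1)) ^ 2 := fun x => by
    have h := ENNReal.coe_le_coe.2 (two_mul_le_add_sq (φ x) ((2⁻¹ : ℝ≥0) ^ (x.length + 1)))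
    push_cast [ENNReal.coe_inv two_ne_zero] at h
    calc 2⁻¹ ^ x.length * (φ x : ℝ≥0∞)
        = (2 * 2⁻¹) * (2⁻¹ ^ x.length * (φ x : ℝ≥0∞)) := by
          rw [ENNReal.mul_inv_cancel two_ne_zero ENNReal.ofNat_ne_top, one_mul]
      _ = 2 * (φ x : ℝ≥0∞) * 2⁻¹ ^ (x.length + 1) := by ring
      _ ≤ _ := h
  have hone : (1 : ℝ≥0∞) ≤ (∑' x : List Bool, (φ x : ℝ≥0∞) ^ 2) + 2⁻¹ :=
    calc (1 : ℝ≥0∞) ≤ meanRaySum (fun x => φ x) [] := (hφ ζ).trans hζ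
      _ ≤ ∑' x : List Bool, ((φ x : ℝ≥0∞) ^ 2 + ((2⁻¹ : ℝ≥0∞) ^ (x.length + 1)) ^ 2) :=
          ENNReal.tsum_le_tsum hamgm
      _ = (∑' x : List Bool, (φ x : ℝ≥0∞) ^ 2) + 2⁻¹ := by
          rw [ENNReal.tsum_add, tsum_list_sq_inv_two_pow_succ]
  rw [← ENNReal.inv_two_add_inv_two] at hone
  exact (ENNReal.add_le_add_iff_right (by norm_num)).1 hone

lemma treeCap_univ : treeCap Set.univ = 2⁻¹ :=
  (treeCap_le_inv_two _).antisymm <| le_treeCap fun φ hφ =>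
    inv_two_le_tsum_sq φ fun ζ => hφ ζ trivial

lemma hasSum_inv_two_pow_succ : HasSum (fun k : ℕ => ((2 : ℝ) ^ (k + 1))⁻¹) 1 := by
  convert hasSum_geometric_two' 1 using 2 with k
  rw [pow_succ]; field_simp

lemma lamReal_term_nonneg (ζ : ℕ → Bool) (k : ℕ) :
    0 ≤ (if ζ k then ((2 : ℝ) ^ (k + 1))⁻¹ else 0) := by
  split_ifs <;> positivity

lemma lamReal_term_le (ζ : ℕ → Bool) (k : ℕ) :
    (if ζ k then ((2 : ℝ) ^ (k + 1))⁻¹ else 0) ≤ ((2 : ℝ) ^ (k + 1))⁻¹ := by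
  split_ifs
  exacts [le_rfl, by positivity]

lemma summable_lamReal (ζ : ℕ → Bool) :
    Summable fun k : ℕ => if ζ k then ((2 : ℝ) ^ (k + 1))⁻¹ else 0 :=
  .of_nonneg_of_le (lamReal_term_nonneg ζ) (lamReal_term_le ζ) hasSum_inv_two_pow_succ.summable

lemma lamReal_nonneg (ζ : ℕ → Bool) : 0 ≤ lamReal ζ :=
  tsum_nonneg (lamReal_term_nonneg ζ)

lemma lamReal_le_one (ζ : ℕ → Bool) : lamReal ζ ≤ 1 :=
  hasSum_le (lamReal_term_le ζ) (summable_lamReal ζ).hasSum hasSum_inv_two_pow_succ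

/-- `dyadicIndex ζ n` is the integer whose binary digits are `ζ 0, …, ζ (n-1)`; the level-`n`
dyadic interval containing `lamReal ζ` is `[dyadicIndex ζ n / 2^n, (dyadicIndex ζ n + 1) / 2^n]`. -/
def dyadicIndex (ζ : ℕ → Bool) : ℕ → ℕ
  | 0 => 0
  | n + 1 => 2 * dyadicIndex ζ n + (ζ n).toNat

lemma sum_range_lamReal (ζ : ℕ → Bool) (n : ℕ) :
    ∑ k ∈ Finset.range n, (if ζ k then ((2 : ℝ) ^ (k + 1))⁻¹ else 0) = dyadicIndex ζ n / 2 ^ n := by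
  induction n with
  | zero => simp [dyadicIndex]
  | succ n ih =>
    rw [Finset.sum_range_succ, ih, dyadicIndex]
    cases ζ n <;>
      simp only [Bool.false_eq_true, ↓reduceIte, add_zero, Bool.toNat_false, Bool.toNat_true,
        Nat.cast_add, Nat.cast_mul, Nat.cast_ofNat, Nat.cast_one] <;>
      field_simp <;> ring

lemma lamReal_eq_dyadicIndex_add (ζ : ℕ → Bool) (n : ℕ) :
    lamReal ζ = (dyadicIndex ζ n + lamReal (fun k => ζ (k + n))) / 2 ^ n := by
  rw [lamReal, ← (summable_lamReal ζ).sum_add_tsum_nat_add n, sum_range_lamReal, add_div,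
    lamReal, ← tsum_div_const]
  congr 1
  refine tsum_congr fun k => ?_
  split_ifs
  · rw [div_eq_mul_inv, ← mul_inv, ← pow_add, add_right_comm]
  · simp

lemma dyadicIndex_div_le_lamReal (ζ : ℕ → Bool) (n : ℕ) :
    dyadicIndex ζ n / 2 ^ n ≤ lamReal ζ := by
  rw [lamReal_eq_dyadicIndex_add ζ n]
  gcongr
  exact le_add_of_nonneg_right (lamReal_nonneg _)

lemma lamReal_le_dyadicIndex_add_one_div (ζ : ℕ → Bool) (n : ℕ) :
    lamReal ζ ≤ (dyadicIndex ζ n + 1) / 2 ^ n := by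
  rw [lamReal_eq_dyadicIndex_add ζ n]
  gcongr
  exact lamReal_le_one _

lemma mem_cylinder_of_dyadicIndex_eq {ζ ζ' : ℕ → Bool} {n : ℕ}
    (h : dyadicIndex ζ' n = dyadicIndex ζ n) : ζ' ∈ cylinder ζ n := by
  induction n with
  | zero => simp [cylinder]
  | succ n ih =>
    simp only [dyadicIndex] at h
    have hlast : ζ' n = ζ n := by
      cases hζ' : ζ' n <;> cases hζ : ζ n <;> simp only [hζ', hζ, Bool.toNat_true,
        Bool.toNat_false] at h ⊢ <;> omega
    intro i hi
    rcases Nat.lt_succ_iff_lt_or_eq.1 hi with hi | rfl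
    · exact ih (by rw [hlast] at h; omega) i hi
    · exact hlast

lemma treeCap_setOf_dyadicIndex_eq_le (n m : ℕ) :
    treeCap {ζ | dyadicIndex ζ n = m} ≤ ((n : ℝ≥0∞) + 1)⁻¹ := by
  rcases Set.eq_empty_or_nonempty {ζ | dyadicIndex ζ n = m} with h | ⟨ζ₀, hζ₀⟩
  · rw [h]
    exact (treeCap_mono (Set.empty_subset _)).trans (treeCap_cylinder_le (fun _ => false) n)
  · refine (treeCap_mono fun ζ hζ => ?_).trans (treeCap_cylinder_le ζ₀ n)
    exact mem_cylinder_of_dyadicIndex_eq (hζ.trans hζ₀.symm)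

lemma dyadicIndex_mem_Icc {ζ : ℕ → Bool} {n : ℕ} {s t : ℝ} (hs : 0 ≤ s)
    (hst : t ≤ s + (2 ^ n)⁻¹) (hζ : lamReal ζ ∈ Set.Icc s t) :
    dyadicIndex ζ n ∈ Finset.Icc (⌊s * 2 ^ n⌋₊ - 1) (⌊s * 2 ^ n⌋₊ + 1) := by
  set m := dyadicIndex ζ n
  set j := ⌊s * 2 ^ n⌋₊
  have h2n : (0 : ℝ) < 2 ^ n := by positivity
  have hm_le : (m : ℝ) ≤ s * 2 ^ n + 1 := by
    have h := (dyadicIndex_div_le_lamReal ζ n).trans (hζ.2.trans hst)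
    rwa [div_le_iff₀ h2n, add_mul, inv_mul_cancel₀ h2n.ne'] at h
  have hm_ge : s * 2 ^ n ≤ m + 1 :=
    (le_div_iff₀ h2n).1 (hζ.1.trans (lamReal_le_dyadicIndex_add_one_div ζ n))
  have hj_le : (j : ℝ) ≤ s * 2 ^ n := Nat.floor_le (by positivity)
  have hj_gt : s * 2 ^ n < j + 1 := Nat.lt_floor_add_one _
  have h1 : m < j + 2 := by exact_mod_cast (show (m : ℝ) < j + 2 by linarith)
  have h2 : j ≤ m + 1 := by exact_mod_cast (show (j : ℝ) ≤ m + 1 by linarith)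
  rw [Finset.mem_Icc]
  omega

lemma treeCap_preimage_Icc_le {n : ℕ} {s t : ℝ} (hs : 0 ≤ s) (hst : t ≤ s + (2 ^ n)⁻¹) :
    treeCap (lamReal ⁻¹' Set.Icc s t) ≤ 3 * ((n : ℝ≥0∞) + 1)⁻¹ := by
  set I := Finset.Icc (⌊s * 2 ^ n⌋₊ - 1) (⌊s * 2 ^ n⌋₊ + 1)
  have hI : I.card ≤ 3 := by simp only [I, Nat.card_Icc]; omega
  calc treeCap (lamReal ⁻¹' Set.Icc s t)
      ≤ treeCap (⋃ m ∈ I, {ζ | dyadicIndex ζ n = m}) :=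
        treeCap_mono fun ζ hζ => Set.mem_iUnion₂.2 ⟨_, dyadicIndex_mem_Icc hs hst hζ, rfl⟩
    _ ≤ ∑ m ∈ I, treeCap {ζ | dyadicIndex ζ n = m} := treeCap_biUnion_le _ _
    _ ≤ I.card • ((n : ℝ≥0∞) + 1)⁻¹ :=
        Finset.sum_le_card_nsmul _ _ _ fun m _ => treeCap_setOf_dyadicIndex_eq_le n m
    _ ≤ 3 * ((n : ℝ≥0∞) + 1)⁻¹ := by
        rw [nsmul_eq_mul]
        gcongr
        exact_mod_cast hI

def capProfile (t : ℝ) : ℝ≥0∞ := treeCap (lamReal ⁻¹' Set.Icc 0 t)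

lemma capProfile_mono : Monotone capProfile := fun _ _ hst =>
  treeCap_mono (Set.preimage_mono (Set.Icc_subset_Icc le_rfl hst))

lemma capProfile_le_add {n : ℕ} {s t : ℝ} (hs : 0 ≤ s) (hst : t ≤ s + (2 ^ n)⁻¹) :
    capProfile t ≤ capProfile s + 3 * ((n : ℝ≥0∞) + 1)⁻¹ := by
  have hcover : lamReal ⁻¹' Set.Icc 0 t ⊆ lamReal ⁻¹' Set.Icc 0 s ∪ lamReal ⁻¹' Set.Icc s t := by
    intro ζ hζ
    rcases le_total (lamReal ζ) s with h | h
    exacts [Or.inl ⟨hζ.1, h⟩, Or.inr ⟨h, hζ.2⟩]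
  exact (treeCap_mono hcover).trans <|
    (treeCap_union_le _ _).trans (add_le_add le_rfl (treeCap_preimage_Icc_le hs hst))

lemma capProfile_zero : capProfile 0 = 0 := by
  have hlim : Tendsto (fun n : ℕ => 3 * ((n : ℝ≥0∞) + 1)⁻¹) atTop (𝓝 0) := by
    have h := ENNReal.Tendsto.const_mul (a := 3)
      (ENNReal.tendsto_inv_nat_nhds_zero.comp (tendsto_add_atTop_nat 1))
      (Or.inr ENNReal.ofNat_ne_top)
    simpa using h
  exact le_antisymm
    (ge_of_tendsto' hlim fun n => treeCap_preimage_Icc_le le_rfl (by positivity)) bot_le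

lemma capProfile_one : capProfile 1 = 2⁻¹ := by
  have huniv : lamReal ⁻¹' Set.Icc 0 1 = Set.univ :=
    Set.eq_univ_of_forall fun ζ => ⟨lamReal_nonneg ζ, lamReal_le_one ζ⟩
  rw [capProfile, huniv, treeCap_univ]

lemma dist_toReal_capProfile_le {n : ℕ} {s t : ℝ} (hs : 0 ≤ s) (ht : 0 ≤ t)
    (hdist : dist s t ≤ (2 ^ n)⁻¹) :
    dist (capProfile s).toReal (capProfile t).toReal ≤ 3 / (n + 1) := by
  wlog hst : s ≤ t generalizing s t
  · rw [dist_comm] at hdist ⊢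
    exact this ht hs hdist (le_of_not_ge hst)
  have hmono : (capProfile s).toReal ≤ (capProfile t).toReal :=
    ENNReal.toReal_mono (treeCap_ne_top _) (capProfile_mono hst)
  have hts : t ≤ s + (2 ^ n)⁻¹ := by
    rw [Real.dist_eq, abs_sub_comm, abs_of_nonneg (sub_nonneg.2 hst)] at hdist
    linarith
  have hle := ENNReal.toReal_le_add (capProfile_le_add hs hts) (treeCap_ne_top _)
    (ENNReal.mul_ne_top ENNReal.ofNat_ne_top (ENNReal.inv_ne_top.2 (by simp)))
  have h3 : (3 * ((n : ℝ≥0∞) + 1)⁻¹).toReal = 3 / (n + 1) := by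
    rw [ENNReal.toReal_mul, ENNReal.toReal_inv, ENNReal.toReal_add (by simp) (by simp)]
    simp [div_eq_mul_inv]
  rw [Real.dist_eq, abs_sub_comm, abs_of_nonneg (sub_nonneg.2 hmono)]
  linarith

lemma uniformContinuousOn_toReal_capProfile :
    UniformContinuousOn (fun t => (capProfile t).toReal) (Set.Ici 0) := by
  refine Metric.uniformContinuousOn_iff_le.2 fun ε hε => ?_
  obtain ⟨n, hn⟩ := exists_nat_gt (3 / ε)
  refine ⟨(2 ^ n)⁻¹, by positivity, fun s hs t ht hdist =>
    (dist_toReal_capProfile_le hs ht hdist).trans ?_⟩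
  rw [div_le_iff₀ (by positivity)]
  rw [div_lt_iff₀ hε] at hn
  nlinarith

/-- Let `Λ : ∂T → [0,1]`, `Λ(ζ) = Σ_{k≥1} ζ_k 2^{-k}`, and define
`f : [0,1] → [0,1/2]` by `f(t) = cap^T(Λ^{-1}([0,t]))`. Then `f` is nondecreasing and
continuous on `[0,1]`, with `f(0) = 0` and `f(1) = 1/2`. -/
theorem capacity_profile_continuous (f : ℝ → ℝ)
    (hf : ∀ t : ℝ, f t = (treeCap (lamReal ⁻¹' Set.Icc 0 t)).toReal) :
    MonotoneOn f (Set.Icc (0:ℝ) 1) ∧ ContinuousOn f (Set.Icc (0:ℝ) 1) ∧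
      f 0 = 0 ∧ f 1 = 1/2 := by
  obtain rfl : f = fun t => (capProfile t).toReal := funext hf
  refine ⟨fun s _ t _ hst => ENNReal.toReal_mono (treeCap_ne_top _) (capProfile_mono hst),
    uniformContinuousOn_toReal_capProfile.continuousOn.mono Set.Icc_subset_Ici_self, ?_, ?_⟩
  · simp [capProfile_zero]
  · simp [capProfile_one]
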